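/- Let R be a set of strings in H(k,m) with associated matrix A of vectorized one-hot encodings (rows indexed by R). If v ∈ R is such that the row of v is a rational linear combination of the other rows of A, and R is resolving, then R \ {v} is also resolving. -/

import Mathlib

/-! A string `r` resolves `x, y` exactly when the linear functional
`u ↦ (oneHot x - oneHot y) ⬝ᵥ u` is nonzero at `oneHot r`, because its value there is
`d(r, y) - d(r, x)`. If no string of `R \ {v}` resolves `x, y`, this functional vanishes on their
encodings, hence on their span, which contains the encoding of `v`; so `v` does not resolve `x, y`
either. -/

open Finset

section OneHot

variable {ι α K : Type*} [Fintype ι] [Fintype α] [DecidableEq α]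

def oneHot [Zero K] [One K] (s : ι → α) : ι × α → K :=
  fun p => if s p.1 = p.2 then 1 else 0

theorem oneHot_dotProduct_oneHot [Ring K] (x r : ι → α) :
    oneHot x ⬝ᵥ (oneHot r : ι × α → K) = (Fintype.card ι : K) - hammingDist x r := by
  have hcoord (i : ι) :
      ∑ a : α, (oneHot x (i, a) : K) * oneHot r (i, a) = if r i = x i then 1 else 0 := by
    simp only [oneHot, ite_mul, one_mul, zero_mul, Fintype.sum_ite_eq]
  have hcard : #{i | r i = x i} + hammingDist x r = Fintype.card ι := by
    rw [hammingDist_comm]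
    exact card_filter_add_card_filter_not _
  rw [dotProduct, Fintype.sum_prod_type]
  simp only [hcoord, sum_boole, ← hcard, Nat.cast_add, add_sub_cancel_right]

theorem sub_oneHot_dotProduct_oneHot [Ring K] (x y r : ι → α) :
    (oneHot x - oneHot y) ⬝ᵥ (oneHot r : ι × α → K) = (hammingDist r y : K) - hammingDist r x := by
  rw [sub_dotProduct, oneHot_dotProduct_oneHot, oneHot_dotProduct_oneHot,
    hammingDist_comm x, hammingDist_comm y, sub_sub_sub_cancel_left]

theorem hammingDist_eq_of_oneHot_mem_span [CommRing K] [CharZero K] {S : Set (ι → α)}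
    {x y v : ι → α} (hS : ∀ r ∈ S, hammingDist r x = hammingDist r y)
    (hv : (oneHot v : ι × α → K) ∈ Submodule.span K (oneHot '' S)) :
    hammingDist v x = hammingDist v y := by
  let φ := dotProductBilin K K (oneHot x - oneHot y : ι × α → K)
  have hφ (r : ι → α) : φ (oneHot r) = 0 ↔ hammingDist r x = hammingDist r y := by
    rw [dotProductBilin_apply_apply, sub_oneHot_dotProduct_oneHot, sub_eq_zero, Nat.cast_inj,
      eq_comm]
  have hspan : Submodule.span K (oneHot '' S) ≤ LinearMap.ker φ := by
    rw [Submodule.span_le]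
    rintro _ ⟨r, hr, rfl⟩
    exact (hφ r).2 (hS r hr)
  exact (hφ v).1 (hspan hv)

end OneHot

theorem remove_dependent_row_resolving_general (k m : ℕ) (R : Set (Fin k → Fin m))
    (enc : (Fin k → Fin m) → (Fin k × Fin m) → ℚ)
    (henc : ∀ s p, enc s p = if s p.1 = p.2 then 1 else 0)
    (v : Fin k → Fin m)
    (hdep : enc v ∈ Submodule.span ℚ (enc '' (R \ {v})))
    (hres : ∀ x y : Fin k → Fin m, x ≠ y → ∃ r ∈ R, hammingDist r x ≠ hammingDist r y) :
    ∀ x y : Fin k → Fin m, x ≠ y → ∃ r ∈ R \ {v}, hammingDist r x ≠ hammingDist r y := by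
  obtain rfl : enc = oneHot := funext fun s => funext (henc s)
  intro x y hxy
  by_contra! hcon
  obtain ⟨r, hrR, hrx⟩ := hres x y hxy
  rcases eq_or_ne r v with rfl | hrv
  · exact hrx (hammingDist_eq_of_oneHot_mem_span hcon hdep)
  · exact hrx (hcon r ⟨hrR, hrv⟩)

theorem remove_dependent_row_resolving (k m : ℕ) (R : Set (Fin k → Fin m))
    (enc : (Fin k → Fin m) → (Fin k × Fin m) → ℚ)
    (henc : ∀ s p, enc s p = if s p.1 = p.2 then 1 else 0)
    (v : Fin k → Fin m) (hv : v ∈ R)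
    (hdep : enc v ∈ Submodule.span ℚ (enc '' (R \ {v})))
    (hres : ∀ x y : Fin k → Fin m, x ≠ y → ∃ r ∈ R, hammingDist r x ≠ hammingDist r y) :
    ∀ x y : Fin k → Fin m, x ≠ y → ∃ r ∈ R \ {v}, hammingDist r x ≠ hammingDist r y :=
  remove_dependent_row_resolving_general k m R enc henc v hdep hres
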